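/- Let c > 0, f differentiable on an open interval containing [a, a+c] with integrable derivative, and suppose M ≥ 0 satisfies |f'(a+tc)| ≤ M for all t ∈ [0,1]. Then |(1/c) ∫_a^{a+c} f(x) dx − (f(a)+f(a+c))/2| ≤ (c/4)·M. -/

import Mathlib

/-!
Integrating by parts against the kernel `x - (a + b) / 2` writes the trapezoid error
`(b - a) (f a + f b) / 2 - ∫ f` as `∫ (x - (a + b) / 2) f' x`, which is at most
`M ∫ |x - (a + b) / 2| = M (b - a)² / 4` when `|f'| ≤ M`; for `b = a + c` divide by `c`.
-/

open MeasureTheory intervalIntegral Set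

theorem integral_abs_sub {a b m : ℝ} (ham : a ≤ m) (hmb : m ≤ b) :
    ∫ x in a..b, |x - m| = ((m - a) ^ 2 + (b - m) ^ 2) / 2 := by
  have left : ∫ x in a..m, |x - m| = ∫ x in a..m, (m - x) := by
    refine integral_congr fun x hx => ?_
    rw [uIcc_of_le ham] at hx
    simp only [abs_of_nonpos (sub_nonpos.2 hx.2), neg_sub]
  have right : ∫ x in m..b, |x - m| = ∫ x in m..b, (x - m) := by
    refine integral_congr fun x hx => ?_
    rw [uIcc_of_le hmb] at hx
    exact abs_of_nonneg (sub_nonneg.2 hx.1)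
  have hcont : Continuous fun x : ℝ => |x - m| := by fun_prop
  rw [← integral_add_adjacent_intervals (hcont.intervalIntegrable a m)
    (hcont.intervalIntegrable m b), left, right,
    integral_sub intervalIntegrable_const intervalIntegrable_id,
    integral_sub intervalIntegrable_id intervalIntegrable_const]
  simp only [intervalIntegral.integral_const, integral_id, smul_eq_mul]
  ring

theorem integral_abs_sub_midpoint {a b : ℝ} (hab : a ≤ b) :
    ∫ x in a..b, |x - (a + b) / 2| = (b - a) ^ 2 / 4 := by
  rw [integral_abs_sub (by linarith) (by linarith)]
  ring

theorem integral_sub_midpoint_mul_deriv {a b : ℝ} {f f' : ℝ → ℝ}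
    (hf : ∀ x ∈ uIcc a b, HasDerivAt f (f' x) x) (hf' : IntervalIntegrable f' volume a b) :
    ∫ x in a..b, (x - (a + b) / 2) * f' x = (b - a) * ((f a + f b) / 2) - ∫ x in a..b, f x := by
  rw [integral_mul_deriv_eq_deriv_mul (u := fun x => x - (a + b) / 2) (u' := fun _ => 1)
    (fun x _ => (hasDerivAt_id' x).sub_const _) hf intervalIntegrable_const hf']
  simp only [one_mul]
  ring

theorem abs_integral_sub_midpoint_mul_le {a b M : ℝ} {g : ℝ → ℝ} (hab : a ≤ b)
    (hg : ∀ x ∈ Icc a b, |g x| ≤ M) :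
    |∫ x in a..b, (x - (a + b) / 2) * g x| ≤ M * ((b - a) ^ 2 / 4) := by
  calc |∫ x in a..b, (x - (a + b) / 2) * g x|
      ≤ ∫ x in a..b, M * |x - (a + b) / 2| := by
        rw [← Real.norm_eq_abs]
        refine norm_integral_le_of_norm_le hab (Filter.Eventually.of_forall fun x hx => ?_)
          ((by fun_prop : Continuous fun x : ℝ => M * |x - (a + b) / 2|).intervalIntegrable a b)
        rw [Real.norm_eq_abs, abs_mul, mul_comm]
        exact mul_le_mul_of_nonneg_right (hg x (Ioc_subset_Icc_self hx)) (abs_nonneg _)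
    _ = M * ((b - a) ^ 2 / 4) := by
        rw [intervalIntegral.integral_const_mul, integral_abs_sub_midpoint hab]

theorem abs_trapezoid_sub_integral_le {a b M : ℝ} {f f' : ℝ → ℝ} (hab : a ≤ b)
    (hf : ∀ x ∈ Icc a b, HasDerivAt f (f' x) x) (hf' : IntervalIntegrable f' volume a b)
    (hM : ∀ x ∈ Icc a b, |f' x| ≤ M) :
    |(b - a) * ((f a + f b) / 2) - ∫ x in a..b, f x| ≤ M * ((b - a) ^ 2 / 4) := by
  rw [← integral_sub_midpoint_mul_deriv (by rwa [uIcc_of_le hab]) hf']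
  exact abs_integral_sub_midpoint_mul_le hab hM

theorem forall_mem_Icc_add_of_forall_unitInterval {a c : ℝ} (hc : 0 < c) {P : ℝ → Prop}
    (hP : ∀ t ∈ Icc (0 : ℝ) 1, P (a + t * c)) : ∀ x ∈ Icc a (a + c), P x := by
  intro x ⟨hax, hxc⟩
  have ht : (x - a) / c ∈ Icc (0 : ℝ) 1 :=
    ⟨div_nonneg (sub_nonneg.2 hax) hc.le, (div_le_one hc).2 (by linarith)⟩
  simpa [div_mul_cancel₀ _ hc.ne'] using hP _ ht

theorem quasi_phi_convex_trapezoid_general (a c M : ℝ) (hc : 0 < c)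
    (f f' : ℝ → ℝ)
    (hf : ∀ x ∈ Set.Icc a (a + c), HasDerivAt f (f' x) x)
    (hint : IntervalIntegrable f' volume a (a + c))
    (hbound : ∀ t ∈ Set.Icc (0:ℝ) 1, |f' (a + t * c)| ≤ M) :
    |(1 / c) * (∫ x in a..(a + c), f x) - (f a + f (a + c)) / 2| ≤ (c / 4) * M := by
  have trapezoid_error := abs_trapezoid_sub_integral_le (by linarith) hf hint
    (forall_mem_Icc_add_of_forall_unitInterval hc hbound)
  rw [add_sub_cancel_left] at trapezoid_error
  have error_eq : (1 / c) * (∫ x in a..(a + c), f x) - (f a + f (a + c)) / 2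
      = -(c * ((f a + f (a + c)) / 2) - ∫ x in a..(a + c), f x) / c := by
    field_simp
    ring
  rw [error_eq, abs_div, abs_neg, abs_of_pos hc, div_le_iff₀ hc]
  linarith

theorem quasi_phi_convex_trapezoid (a c M : ℝ) (hc : 0 < c) (hM : 0 ≤ M)
    (f f' : ℝ → ℝ)
    (hf : ∀ x ∈ Set.Icc a (a + c), HasDerivAt f (f' x) x)
    (hint : IntervalIntegrable f' volume a (a + c))
    (hbound : ∀ t ∈ Set.Icc (0:ℝ) 1, |f' (a + t * c)| ≤ M) :
    |(1 / c) * (∫ x in a..(a + c), f x) - (f a + f (a + c)) / 2| ≤ (c / 4) * M :=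
  quasi_phi_convex_trapezoid_general a c M hc f f' hf hint hbound
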